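/- arXiv:1203.6689 — 3 statements merged into one kernel-verified Lean document; each statement's English description precedes it below -/
import Mathlib

section
/- Let $k$ be a field, $V$ a $k$-vector space of dimension $d$, and let $K/k$ be a field extension containing elements $t_1,\ldots,t_d$ that are algebraically independent over $k$. For a $k$-basis $\underline{v}=(v_1,\ldots,v_d)$ of $V$ and $a\in K$ set $b(\underline{v},a)=\sum_{i=1}^d a^{i-1} v_i \in K\otimes_k V$. Then for any $d$ bases $\underline{v}^{(1)},\ldots,\underline{v}^{(d)}$ of $V$ and any nonzero $v\in V$, the set of $d+1$ vectors $(v, b(\underline{v}^{(1)},t_1),\ldots, b(\underline{v}^{(d)},t_d))$ in $K\otimes_k V$ is in general position, i.e., every subset with at most $d$ vectors is linearly independent over $K$. -/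
/-!
In coordinates with respect to a basis of `V`, the vector `v` has entries in `k`, and
`b(v⁽ⁱ⁾, tᵢ) = Mᵢ (1, tᵢ, …, tᵢ^(d-1))` for an invertible matrix `Mᵢ` over `k`. Take a linear
relation among at most `d` of the vectors and let `i` index one of the `b`-vectors in it. The
other vectors of the relation have entries in `L = k(tⱼ : j ≠ i)` and there are fewer than `d` of
them, so a nonzero `a ∈ Lᵈ` is orthogonal to all of them. Pairing `a` with `b(v⁽ⁱ⁾, tᵢ)` gives
`∑ⱼ (a Mᵢ)ⱼ tᵢ^j`, a nonzero polynomial over `L` evaluated at `tᵢ`, which does not vanish because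
`tᵢ` is transcendental over `L`. Hence every `b`-vector has coefficient zero, and what remains is
a multiple of `v ≠ 0`.
-/

open TensorProduct Polynomial Matrix

theorem Matrix.exists_mulVec_eq_zero_of_card_lt {L m n : Type*} [Field L] [Fintype m] [Fintype n]
    (X : Matrix m n L) (h : Fintype.card m < Fintype.card n) : ∃ a ≠ 0, X *ᵥ a = 0 := by
  obtain ⟨a, ha, ha0⟩ := (Submodule.ne_bot_iff _).mp <|
    LinearMap.ker_ne_bot_of_finrank_lt (f := X.mulVecLin) (by simpa using h)
  exact ⟨a, ha0, ha⟩

theorem eq_zero_of_sum_smul_eq_zero_of_notMem_span {K V ι : Type*} [DivisionRing K]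
    [AddCommGroup V] [Module K V] [Fintype ι] [DecidableEq ι] {x : ι → V} {g : ι → K}
    (hg : ∑ p, g p • x p = 0) {i : ι}
    (hi : x i ∉ Submodule.span K (Set.range fun p : {p // p ≠ i} => x p)) : g i = 0 := by
  by_contra hgi
  rw [Fintype.sum_eq_add_sum_subtype_ne _ i, add_eq_zero_iff_eq_neg] at hg
  refine hi ?_
  rw [← inv_smul_smul₀ hgi (x i), hg]
  exact Submodule.smul_mem _ _ <| Submodule.neg_mem _ <| Submodule.sum_mem _ fun p _ =>
    Submodule.smul_mem _ _ <| Submodule.subset_span ⟨p, rfl⟩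

namespace Transcendental

variable {L K : Type*} {t : K}

theorem dotProduct_pow_ne_zero [CommRing L] [CommRing K] [Algebra L K] (ht : Transcendental L t)
    {n : ℕ} {c : Fin n → L} (hc : c ≠ 0) :
    (algebraMap L K ∘ c) ⬝ᵥ (fun j : Fin n => t ^ (j : ℕ)) ≠ 0 := by
  classical
  refine fun h => ht ⟨ofFn n c, fun h0 => hc (injective_ofFn n (h0.trans (ofFn_zero n).symm)), ?_⟩
  rw [ofFn_eq_sum_monomial, map_sum]
  simpa [aeval_monomial, dotProduct] using h

theorem mulVec_pow_notMem_span [Field L] [CommRing K] [Algebra L K] (ht : Transcendental L t)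
    {d : ℕ} {M : Matrix (Fin d) (Fin d) L} (hM : IsUnit M) {ι : Type*} [Fintype ι]
    (hι : Fintype.card ι < d) (X : ι → Fin d → L) :
    M.map (algebraMap L K) *ᵥ (fun j => t ^ (j : ℕ)) ∉
      Submodule.span K (Set.range fun p => algebraMap L K ∘ X p) := by
  obtain ⟨a, ha0, hXa⟩ := (Matrix.of X).exists_mulVec_eq_zero_of_card_lt (by simpa using hι)
  have haM : a ᵥ* M ≠ 0 := by
    simpa using (vecMul_injective_iff_isUnit.mpr hM).ne ha0
  intro hmem
  obtain ⟨g, hg⟩ := (Submodule.mem_span_range_iff_exists_fun K).mp hmem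
  apply ht.dotProduct_pow_ne_zero haM
  calc (algebraMap L K ∘ (a ᵥ* M)) ⬝ᵥ (fun j : Fin d => t ^ (j : ℕ))
      = (algebraMap L K ∘ a) ⬝ᵥ (M.map (algebraMap L K) *ᵥ fun j => t ^ (j : ℕ)) := by
        rw [dotProduct_mulVec]
        exact congrArg (· ⬝ᵥ _) (funext fun j => RingHom.map_vecMul _ M a j)
    _ = ∑ p, g p * algebraMap L K (X p ⬝ᵥ a) := by
        rw [← hg, dotProduct_sum]
        refine Finset.sum_congr rfl fun p _ => ?_
        rw [dotProduct_smul, smul_eq_mul, dotProduct_comm, RingHom.map_dotProduct]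
    _ = 0 := by
        simp [show ∀ p, X p ⬝ᵥ a = 0 from congrFun hXa]

end Transcendental

section GeneralPosition

variable {k K : Type*} [Field k] [Field K] [Algebra k K] {d : ℕ}

theorem mulVec_pow_notMem_span_sumElim {σ τ : Type*} [Fintype σ] [Fintype τ]
    (hcard : Fintype.card σ + Fintype.card τ ≤ d) (u : σ → Fin d → k) {t : τ → K}
    (ht : AlgebraicIndependent k t) {M : τ → Matrix (Fin d) (Fin d) k} (hM : ∀ i, IsUnit (M i))
    (i : τ) :
    (M i).map (algebraMap k K) *ᵥ (fun j => t i ^ (j : ℕ)) ∉ Submodule.span K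
      (Set.range fun p : {p // p ≠ Sum.inr i} => Sum.elim (fun j => algebraMap k K ∘ u j)
        (fun i => (M i).map (algebraMap k K) *ᵥ fun j => t i ^ (j : ℕ)) p.1) := by
  classical
  set x := Sum.elim (fun j => algebraMap k K ∘ u j)
      (fun i => (M i).map (algebraMap k K) *ᵥ fun j => t i ^ (j : ℕ)) with hx
  let L := IntermediateField.adjoin k (t '' {i}ᶜ)
  have hL : ∀ p ≠ .inr i, ∀ l, x p l ∈ L := by
    rintro (j | i') hp l
    · exact L.algebraMap_mem _
    · have hi' : i' ≠ i := fun h => hp (h ▸ rfl)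
      simp only [hx, Sum.elim_inr, mulVec, dotProduct, map_apply]
      exact sum_mem fun j _ => mul_mem (L.algebraMap_mem _)
        (pow_mem (IntermediateField.subset_adjoin k _ (Set.mem_image_of_mem t hi')) _)
  have hcard' : Fintype.card {p : σ ⊕ τ // p ≠ .inr i} < d := by
    have := Fintype.card_subtype_lt (p := fun p : σ ⊕ τ => p ≠ .inr i) (x := .inr i) (by simp)
    rw [Fintype.card_sum] at this
    omega
  have hMi : (M i).map (algebraMap k K) = ((M i).map (algebraMap k L)).map (algebraMap L K) := by
    rw [Matrix.map_map, ← RingHom.coe_comp, ← IsScalarTower.algebraMap_eq]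
  rw [hMi]
  exact Transcendental.mulVec_pow_notMem_span
    (IntermediateField.transcendental_adjoin_iff.mpr
      (ht.transcendental_adjoin (s := {i}ᶜ) (i := i) (by simp)))
    ((hM i).map (algebraMap k L).mapMatrix) hcard' (fun p l => (⟨x p.1 l, hL p.1 p.2 l⟩ : L))

theorem linearIndependent_sumElim_mulVec_pow {σ τ : Type*} [Fintype σ] [Fintype τ]
    (hcard : Fintype.card σ + Fintype.card τ ≤ d) {u : σ → Fin d → k}
    (hu : LinearIndependent k u) {t : τ → K} (ht : AlgebraicIndependent k t)
    {M : τ → Matrix (Fin d) (Fin d) k} (hM : ∀ i, IsUnit (M i)) :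
    LinearIndependent K (Sum.elim (fun j => algebraMap k K ∘ u j)
      (fun i => (M i).map (algebraMap k K) *ᵥ fun j => t i ^ (j : ℕ))) := by
  classical
  rw [Fintype.linearIndependent_iff]
  intro g hg
  have hτ : ∀ i, g (.inr i) = 0 := fun i =>
    eq_zero_of_sum_smul_eq_zero_of_notMem_span hg (mulVec_pow_notMem_span_sumElim hcard u ht hM i)
  have hσ : ∑ j, g (.inl j) • (algebraMap k K ∘ u j) = 0 := by
    simpa [Fintype.sum_sum_type, hτ] using hg
  have hu' : LinearIndependent K fun j => algebraMap k K ∘ u j :=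
    linearIndependent_algebraMap_comp_iff.mpr hu
  rintro (j | i)
  · exact Fintype.linearIndependent_iff.mp hu' _ hσ j
  · exact hτ i

theorem linearIndependent_finCases_mulVec_pow_of_card_le {u : Fin d → k} (hu : u ≠ 0)
    {t : Fin d → K} (ht : AlgebraicIndependent k t) {M : Fin d → Matrix (Fin d) (Fin d) k}
    (hM : ∀ i, IsUnit (M i)) {s : Finset (Fin (d + 1))} (hs : s.card ≤ d) :
    LinearIndependent K fun i : s => (Fin.cases (algebraMap k K ∘ u)
      (fun i => (M i).map (algebraMap k K) *ᵥ fun j => t i ^ (j : ℕ)) (i : Fin (d + 1)) :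
        Fin d → K) := by
  let p : s → Prop := fun i => (i : Fin (d + 1)) = 0
  let idx : {i // ¬ p i} → Fin d := fun i => (i.1 : Fin (d + 1)).pred i.2
  have hidx : Function.Injective idx := fun i j h =>
    Subtype.ext (Subtype.ext (Fin.pred_inj.mp h))
  have hcard : Fintype.card {i // p i} + Fintype.card {i // ¬ p i} ≤ d := by
    rw [← Fintype.card_sum, Fintype.card_congr (Equiv.sumCompl p)]
    simpa using hs
  have : Subsingleton {i // p i} := ⟨fun i j => Subtype.ext (Subtype.ext (i.2.trans j.2.symm))⟩
  have hu' : LinearIndependent k fun _ : {i // p i} => u := by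
    rw [linearIndependent_subsingleton_index_iff]
    exact fun _ => hu
  have key := linearIndependent_sumElim_mulVec_pow hcard hu' (ht.comp idx hidx)
    (M := fun i => M (idx i)) fun i => hM (idx i)
  convert key.comp _ (Equiv.sumCompl p).symm.injective using 1
  funext i
  by_cases hi : p i
  · have h0 : (i : Fin (d + 1)) = 0 := hi
    simp only [Function.comp_apply, Equiv.sumCompl_symm_apply_of_pos hi, Sum.elim_inl, h0,
      Fin.cases_zero]
  · have hsucc : (i : Fin (d + 1)) = (idx ⟨i, hi⟩).succ := (Fin.succ_pred _ _).symm
    simp only [Function.comp_apply, Equiv.sumCompl_symm_apply_of_neg hi, Sum.elim_inr, hsucc,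
      Fin.cases_succ]

end GeneralPosition

namespace Module.Basis

variable {k K V ι : Type*} [CommRing k] [CommRing K] [Algebra k K] [AddCommGroup V] [Module k V]
  [Fintype ι] (e : Basis ι k V)

theorem baseChange_equivFun_one_tmul (x : V) :
    (e.baseChange K).equivFun (1 ⊗ₜ x) = algebraMap k K ∘ e.repr x := by
  ext l
  simp [baseChange_repr_tmul, Algebra.algebraMap_eq_smul_one]

theorem baseChange_equivFun_sum_pow_smul {n : ℕ} (m : Fin n → V) (a : K) :
    (e.baseChange K).equivFun (∑ j : Fin n, a ^ (j : ℕ) • ((1 : K) ⊗ₜ[k] m j)) =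
      (e.toMatrix m).map (algebraMap k K) *ᵥ fun j => a ^ (j : ℕ) := by
  ext l
  simp [mulVec, dotProduct, toMatrix_apply, Algebra.smul_def, mul_comm]

end Module.Basis

/-- Hill's general position lemma (Lemma 3.1 of the paper / Lemma 1 of Hill):
given algebraically independent `t₁, …, t_d` in a field extension `K/k`, a `d`-dimensional
`k`-vector space `V`, bases `v⁽¹⁾, …, v⁽ᵈ⁾` of `V` and a nonzero `v ∈ V`, the `d+1` vectors
`v, b(v⁽¹⁾,t₁), …, b(v⁽ᵈ⁾,t_d)` of `K ⊗[k] V` (where `b(v̲,a) = ∑ⱼ a^(j-1) vⱼ`) are in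
general position: any at most `d` of them are linearly independent over `K`. -/
theorem stmt0 (k K : Type*) [Field k] [Field K] [Algebra k K]
    (d : ℕ) (V : Type*) [AddCommGroup V] [Module k V]
    (t : Fin d → K) (ht : AlgebraicIndependent k t)
    (vB : Fin d → Module.Basis (Fin d) k V) (v : V) (hv : v ≠ 0)
    (W : Fin (d + 1) → K ⊗[k] V)
    (hW : W = Fin.cases ((1 : K) ⊗ₜ[k] v)
      (fun i => ∑ j : Fin d, (t i) ^ (j : ℕ) • ((1 : K) ⊗ₜ[k] (vB i) j))) :
    ∀ s : Finset (Fin (d + 1)), s.card ≤ d →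
      LinearIndependent K (fun i : s => W i) := by
  intro s hs
  rcases Nat.eq_zero_or_pos d with rfl | hd
  · have : IsEmpty s := by simpa using hs
    exact linearIndependent_empty_type
  let e := vB ⟨0, hd⟩
  have key := linearIndependent_finCases_mulVec_pow_of_card_le (K := K) (u := e.repr v)
    (by simpa using hv) ht (M := fun i => e.toMatrix (vB i))
    (fun i => letI := e.invertibleToMatrix (vB i); isUnit_of_invertible _) hs
  have hcoord : ∀ i, (e.baseChange K).equivFun (W i) = Fin.cases (algebraMap k K ∘ e.repr v)
      (fun i => (e.toMatrix (vB i)).map (algebraMap k K) *ᵥ fun j => t i ^ (j : ℕ)) i := by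
    subst hW
    refine Fin.cases ?_ fun i => ?_
    · exact e.baseChange_equivFun_one_tmul v
    · exact e.baseChange_equivFun_sum_pow_smul (vB i) (t i)
  refine LinearIndependent.of_comp (e.baseChange K).equivFun.toLinearMap ?_
  convert key using 1
  funext i
  exact hcoord i
end

section
/- Let $k$ be an ordered field, $V$ a $d$-dimensional $k$-vector space with determinant form $\omega$, and let $K/k$ be an extension of ordered fields carrying a valuation $w$ with value group $\mathbb{Z}^{d+1}$ (lexicographic), residue field $k$, valuation ring $\mathcal{O}_w$, and parameters $t_1,\ldots,t_d$ as above. Fix a basis $\underline{v}=(v_1,\ldots,v_d)$ of $V$ and set $b(\underline{v},a)=\sum_{i=1}^d a^{i-1}v_i$. Let $g_1,\ldots,g_d \in \mathrm{GL}(V)$ be such that $b_1=g_1(v_1),\ldots,b_d=g_d(v_1)$ form a basis of $V$, and let $v \in V \setminus\{0\}$ have coordinates $\lambda_1,\ldots,\lambda_d \in K$ with respect to the $K$-basis $(g_1(b(\underline{v},t_1)),\ldots,g_d(b(\underline{v},t_d)))$ of $V_K$. Then all $\lambda_i$ lie in $\mathcal{O}_w$, and the residues $\bar\lambda_1,\ldots,\bar\lambda_d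 \in k$ are precisely the coordinates of $v$ with respect to the basis $(b_1,\ldots,b_d)$ of $V$. -/
/-!
Write `b_l = g_l(v_1)` and let `A` be the matrix whose `i`-th row holds the coordinates of
`g_i(b(v̲, t_i)) = ∑_j t_i^(j-1) g_i(v_j)` in the basis `(b_l)`. Its entries lie in `O`, and since
every `t_i` has residue `0`, only the term `j = 1` survives reduction: `A` reduces to the identity
matrix. Hence `det A` is a unit of `O`, so `A` is invertible over `O`. The coordinates `μ ∈ kᵈ` of
`v` satisfy `μ = λ A`, so `λ = μ A⁻¹` has entries in `O`, and reducing `μ = λ A` gives `μ = λ̄`.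
-/

open TensorProduct Matrix

namespace Subring

variable {K : Type*}

def residueHom {k : Type*} [CommRing K] [CommRing k] (O : Subring K) (ρ : K → k)
    (hρadd : ∀ x y : K, x ∈ O → y ∈ O → ρ (x + y) = ρ x + ρ y)
    (hρmul : ∀ x y : K, x ∈ O → y ∈ O → ρ (x * y) = ρ x * ρ y) (hρone : ρ 1 = 1) : O →+* k where
  toFun x := ρ x
  map_one' := hρone
  map_mul' x y := hρmul x y x.2 y.2
  map_zero' := by simpa using hρadd 0 0 O.zero_mem O.zero_mem
  map_add' x y := hρadd x y x.2 y.2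

theorem isUnit_of_inv_mem [Field K] {O : Subring K} {x : O} (hx : (x : K) ≠ 0)
    (hinv : (x : K)⁻¹ ∈ O) : IsUnit x :=
  IsUnit.of_mul_eq_one ⟨_, hinv⟩ (Subtype.ext (mul_inv_cancel₀ hx))

end Subring

section ResidueMatrix

variable {R S : Type*} [CommRing R] [CommRing S] {n : Type*} [Fintype n] [DecidableEq n]

theorem RingHom.map_sum_pow_mul_of_map_eq_zero (π : R →+* S) {s : R} (hs : π s = 0) {d : ℕ}
    (hd : 0 < d) (c : Fin d → R) : π (∑ j : Fin d, s ^ (j : ℕ) * c j) = π (c ⟨0, hd⟩) := by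
  obtain ⟨d, rfl⟩ := Nat.exists_eq_add_one_of_ne_zero hd.ne'
  simp [Fin.sum_univ_succ, hs]

theorem Matrix.isUnit_det_of_map_eq_one [Nontrivial S] (π : R →+* S)
    (hunit : ∀ x, π x ≠ 0 → IsUnit x) {A : Matrix n n R} (hA : A.map π = 1) : IsUnit A.det :=
  hunit _ (by rw [RingHom.map_det, RingHom.mapMatrix_apply, hA, det_one]; exact one_ne_zero)

theorem Matrix.comp_eq_of_vecMul_eq_of_map_eq_one (π : R →+* S) {A : Matrix n n R}
    (hA : A.map π = 1) {x y : n → R} (h : x ᵥ* A = y) : π ∘ x = π ∘ y := by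
  ext l
  simp only [← h, Function.comp_apply, RingHom.map_vecMul, hA, vecMul_one]

end ResidueMatrix

section SubringMatrix

variable {K : Type*} [CommRing K] {O : Subring K} {n : Type*} [Fintype n] [DecidableEq n]

theorem Matrix.eq_vecMul_inv_of_vecMul_map_subtype {A : Matrix n n O} (hA : IsUnit A.det)
    {x : n → K} {y : n → O} (h : x ᵥ* A.map O.subtype = O.subtype ∘ y) :
    x = O.subtype ∘ (y ᵥ* A⁻¹) := by
  have hinv : A.map O.subtype * A⁻¹.map O.subtype = 1 := by
    rw [← Matrix.map_mul, mul_nonsing_inv A hA, Matrix.map_one _ (map_zero _) (map_one _)]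
  ext i
  rw [Function.comp_apply, RingHom.map_vecMul, ← h, vecMul_vecMul, hinv, vecMul_one]

theorem Subring.exists_eq_comp_subtype_of_vecMul_eq {S : Type*} [CommRing S] [Nontrivial S]
    (π : O →+* S) (hunit : ∀ x, π x ≠ 0 → IsUnit x) {A : Matrix n n O} (hA : A.map π = 1)
    {x : n → K} {y : n → O} (h : x ᵥ* A.map O.subtype = O.subtype ∘ y) :
    ∃ x' : n → O, x = O.subtype ∘ x' ∧ π ∘ x' = π ∘ y := by
  have hdet : IsUnit A.det := isUnit_det_of_map_eq_one π hunit hA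
  refine ⟨y ᵥ* A⁻¹, eq_vecMul_inv_of_vecMul_map_subtype hdet h,
    comp_eq_of_vecMul_eq_of_map_eq_one π hA ?_⟩
  rw [vecMul_vecMul, nonsing_inv_mul A hdet, vecMul_one]

end SubringMatrix

theorem stmt4_general (k K : Type*) [Field k] [Field K] [Algebra k K]
    (O : Subring K)
    (halg : ∀ c : k, algebraMap k K c ∈ O)
    (ρ : K → k)
    (hρadd : ∀ x y : K, x ∈ O → y ∈ O → ρ (x + y) = ρ x + ρ y)
    (hρmul : ∀ x y : K, x ∈ O → y ∈ O → ρ (x * y) = ρ x * ρ y)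
    (hρalg : ∀ c : k, ρ (algebraMap k K c) = c)
    (hunit : ∀ x : K, x ∈ O → ρ x ≠ 0 → x ≠ 0 ∧ x⁻¹ ∈ O)
    (d : ℕ) (hd : 0 < d)
    (V : Type*) [AddCommGroup V] [Module k V]
    (vB : Module.Basis (Fin d) k V)
    (g : Fin d → (V ≃ₗ[k] V))
    (t : Fin d → K)
    (ht : ∀ i, t i ∈ O ∧ ρ (t i) = 0)
    (hb : LinearIndependent k (fun i : Fin d => g i (vB ⟨0, hd⟩)))
    (v : V)
    (lam : Fin d → K)
    (hlam : (1 : K) ⊗ₜ[k] v =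
      ∑ i : Fin d, lam i • (∑ j : Fin d, (t i) ^ (j : ℕ) • ((1 : K) ⊗ₜ[k] (g i (vB j))))) :
    (∀ i, lam i ∈ O) ∧ v = ∑ i : Fin d, ρ (lam i) • g i (vB ⟨0, hd⟩) := by
  have : Nonempty (Fin d) := ⟨⟨0, hd⟩⟩
  let π : O →+* k := O.residueHom ρ hρadd hρmul (by simpa using hρalg 1)
  let ι : k →+* O := (algebraMap k K).codRestrict O halg
  have hπι (c : k) : π (ι c) = c := hρalg c
  let bB := basisOfLinearIndependentOfCardEqFinrank hb
    (by rw [Fintype.card_fin, Module.finrank_eq_card_basis vB, Fintype.card_fin])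
  have hbB (i : Fin d) : bB i = g i (vB ⟨0, hd⟩) := by
    simp [bB, coe_basisOfLinearIndependentOfCardEqFinrank]
  let A : Matrix (Fin d) (Fin d) O := fun i l =>
    ∑ j : Fin d, ⟨t i, (ht i).1⟩ ^ (j : ℕ) * ι (bB.repr (g i (vB j)) l)
  have hA : A.map π = 1 := by
    ext i l
    rw [Matrix.map_apply, π.map_sum_pow_mul_of_map_eq_zero (ht i).2 hd, hπι, ← hbB,
      bB.repr_self, Finsupp.single_apply, one_apply]
  have hcoord : lam ᵥ* A.map O.subtype = O.subtype ∘ (ι ∘ bB.repr v) := by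
    ext l
    have h := congrArg (fun z => (bB.baseChange K).repr z l) hlam
    have hAval (i : Fin d) : (A i l : K) =
        ∑ j : Fin d, t i ^ (j : ℕ) * algebraMap k K (bB.repr (g i (vB j)) l) := by
      simp [A, ι]
    simp only [vecMul, dotProduct, Matrix.map_apply, Subring.coe_subtype, hAval]
    simpa [ι, Finset.mul_sum, Algebra.smul_def, mul_assoc] using h.symm
  obtain ⟨x, hlamx, hres⟩ := Subring.exists_eq_comp_subtype_of_vecMul_eq π
    (fun x hx => Subring.isUnit_of_inv_mem (hunit x x.2 hx).1 (hunit x x.2 hx).2) hA hcoord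
  refine ⟨fun i => hlamx ▸ (x i).2, ?_⟩
  have hρlam (i : Fin d) : ρ (lam i) = bB.repr v i := by
    rw [hlamx]
    exact (congrFun hres i).trans (hπι _)
  simp_rw [hρlam, ← hbB]
  exact (bB.sum_repr v).symm

/-- Key step of Lemma 3.6 of the paper: let `K/k` be a field extension, `O ⊆ K` a valuation
ring containing `k`, with residue map `ρ : K → k` (a retraction of `k ⊆ O ⊆ K`), and let
`t₁,…,t_d ∈ K` lie in the maximal ideal of `O`.  Let `V` be a `d`-dimensional `k`-vector
space with basis `v₁,…,v_d`, let `g₁,…,g_d` be automorphisms of `V` such that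
`b₁ = g₁(v₁),…,b_d = g_d(v₁)` are linearly independent, and let `v ∈ V` be nonzero with
coordinates `λ₁,…,λ_d ∈ K` with respect to the vectors `g_i(b(v̲,t_i)) ∈ K ⊗[k] V`.
Then all `λᵢ` lie in `O`, and their residues are the coordinates of `v` with respect to
`(b₁,…,b_d)`. -/
theorem stmt4 (k K : Type*) [Field k] [Field K] [Algebra k K]
    (O : Subring K)
    (halg : ∀ c : k, algebraMap k K c ∈ O)
    (hval : ∀ x : K, x ∈ O ∨ x⁻¹ ∈ O)
    (ρ : K → k)
    (hρadd : ∀ x y : K, x ∈ O → y ∈ O → ρ (x + y) = ρ x + ρ y)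
    (hρmul : ∀ x y : K, x ∈ O → y ∈ O → ρ (x * y) = ρ x * ρ y)
    (hρalg : ∀ c : k, ρ (algebraMap k K c) = c)
    (hunit : ∀ x : K, x ∈ O → ρ x ≠ 0 → x ≠ 0 ∧ x⁻¹ ∈ O)
    (d : ℕ) (hd : 0 < d)
    (V : Type*) [AddCommGroup V] [Module k V]
    (vB : Module.Basis (Fin d) k V)
    (g : Fin d → (V ≃ₗ[k] V))
    (t : Fin d → K)
    (ht : ∀ i, t i ∈ O ∧ ρ (t i) = 0)
    (hb : LinearIndependent k (fun i : Fin d => g i (vB ⟨0, hd⟩)))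
    (v : V) (hv : v ≠ 0)
    (lam : Fin d → K)
    (hlam : (1 : K) ⊗ₜ[k] v =
      ∑ i : Fin d, lam i • (∑ j : Fin d, (t i) ^ (j : ℕ) • ((1 : K) ⊗ₜ[k] (g i (vB j))))) :
    (∀ i, lam i ∈ O) ∧ v = ∑ i : Fin d, ρ (lam i) • g i (vB ⟨0, hd⟩) :=
  stmt4_general k K O halg ρ hρadd hρmul hρalg hunit d hd V vB g t ht hb v lam hlam
end

section
/- With the notation of the previous statement (so $b_1=g_1(v_1),\ldots,b_d=g_d(v_1)$ a basis of $V$, and $\tilde b_i = g_i(b(\underline{v},t_i))$): (1) $\mathrm{sign}(\omega(b_1,\ldots,b_d)) = \mathrm{sign}(\omega(\tilde b_1,\ldots,\tilde b_d))$, where $\omega$ is extended $K$-multilinearly and signs are taken in the ordered field $K$; and (2) the open cone $C(b_1,\ldots,b_d) = \{\sum \lambda_i b_i : \lambda_i \in k, \lambda_i > 0\}$ is contained in $C(\tilde b_1,\ldots,\tilde b_d) \cap V$ (positive $K$-coefficients), which in turn is contained in the closed cone $C[b_1,\ldots,b_d] = \{\sum \lambda_i b_i : \lambda_i \in k, \lambda_i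 \ge 0\} \setminus \{0\}$. -/
/-!
Write `b̃ᵢ = ∑ₗ Aᵢₗ (1 ⊗ bₗ)`. Since `ρ(tᵢ) = 0`, only the term `j = 0` of `b̃ᵢ` survives in the
residue, and `gᵢ(v₁) = bᵢ`, so `A` has entries in `O` and residue matrix `1`. As `ρ` is a local
homomorphism, `A` is then invertible over `O` and `A⁻¹` is residually the identity too. Hence
`ω_K(b̃) = det A · ω(b)` has residue `ω(b)`, and the `b̃`-coordinates `μ = c A⁻¹` of a vector of `V`
with `b`-coordinates `c` lie in `O` and reduce to `c`. Since signs in `K` are read off residues,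
both the sign of `ω` and (non)negativity of coordinates transfer.
-/

open TensorProduct Matrix

namespace Matrix

variable {R S ι F : Type*} [CommRing R] [CommRing S] [Fintype ι] [DecidableEq ι]
  [FunLike F R S] [RingHomClass F R S] (f : F) {A : Matrix ι ι R}

theorem map_det_eq_one (hA : A.map f = 1) : f A.det = 1 := by
  rw [← RingHom.coe_coe f, RingHom.map_det, RingHom.mapMatrix_apply, RingHom.coe_coe, hA, det_one]

theorem isUnit_det_of_map_eq_one_s5 [IsLocalHom f] (hA : A.map f = 1) : IsUnit A.det :=
  IsUnit.of_map f _ (by rw [map_det_eq_one f hA]; exact isUnit_one)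

theorem map_nonsing_inv_eq_one [IsLocalHom f] (hA : A.map f = 1) : A⁻¹.map f = 1 := by
  simpa [Matrix.map_mul, hA] using
    congrArg (·.map f) (nonsing_inv_mul A (isUnit_det_of_map_eq_one_s5 f hA))

theorem map_vecMul_of_map_eq_one (hA : A.map f = 1) (y : ι → R) (i : ι) :
    f ((y ᵥ* A) i) = f (y i) := by
  simpa [hA] using RingHom.map_vecMul (f : R →+* S) A y i

theorem vecMul_map_eq_comp_iff (hA : IsUnit A.det) (μ : ι → S) (y : ι → R) :
    μ ᵥ* A.map f = f ∘ y ↔ μ = f ∘ (y ᵥ* A⁻¹) := by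
  have hinv : A⁻¹.map f * A.map f = 1 := by
    rw [← Matrix.map_mul, nonsing_inv_mul A hA, Matrix.map_one f (map_zero f) (map_one f)]
  have hinv' : A.map f * A⁻¹.map f = 1 := by
    rw [← Matrix.map_mul, mul_nonsing_inv A hA, Matrix.map_one f (map_zero f) (map_one f)]
  rw [show f ∘ (y ᵥ* A⁻¹) = (f ∘ y) ᵥ* A⁻¹.map f from
    funext (RingHom.map_vecMul (f : R →+* S) _ y)]
  constructor
  · intro h
    rw [← h, vecMul_vecMul, hinv', vecMul_one]
  · rintro rfl
    rw [vecMul_vecMul, hinv, vecMul_one]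

end Matrix

theorem AlternatingMap.map_eq_det_mul_map_basis {K M ι : Type*} [CommRing K] [AddCommGroup M]
    [Module K M] [Fintype ι] [DecidableEq ι] (e : Module.Basis ι K M) (f : M [⋀^ι]→ₗ[K] K)
    {W : ι → M} {A : Matrix ι ι K} (hW : ∀ i l, e.repr (W i) l = A i l) :
    f W = A.det * f e := by
  have : e.toMatrix W = Aᵀ := Matrix.ext fun l i => hW i l
  conv_lhs => rw [f.eq_smul_basis_det e]
  rw [AlternatingMap.smul_apply, e.det_apply, this, det_transpose, smul_eq_mul, mul_comm]

theorem map_sum_pow_mul_of_map_eq_zero {R S F : Type*} [CommRing R] [CommRing S] [FunLike F R S]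
    [RingHomClass F R S] (f : F) {t : R} (ht : f t = 0) {d : ℕ} (hd : 0 < d) (a : Fin d → R) :
    f (∑ j : Fin d, t ^ (j : ℕ) * a j) = f (a ⟨0, hd⟩) := by
  obtain ⟨n, rfl⟩ := Nat.exists_eq_add_one_of_ne_zero hd.ne'
  simp [Fin.sum_univ_succ, ht]

section ResidueMap

variable {k K : Type*} [Field k] [Field K] [Algebra k K]

def Subalgebra.residueAlgHom (O : Subalgebra k K) (ρ : K → k)
    (hadd : ∀ x y : K, x ∈ O → y ∈ O → ρ (x + y) = ρ x + ρ y)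
    (hmul : ∀ x y : K, x ∈ O → y ∈ O → ρ (x * y) = ρ x * ρ y)
    (halg : ∀ c : k, ρ (algebraMap k K c) = c) : O →ₐ[k] k where
  toFun x := ρ x
  map_one' := by simpa using halg 1
  map_mul' x y := hmul x y x.2 y.2
  map_zero' := by simpa using halg 0
  map_add' x y := hadd x y x.2 y.2
  commutes' := halg

theorem Subalgebra.isLocalHom_of_inv_mem {O : Subalgebra k K} (φ : O →ₐ[k] k)
    (h : ∀ x : O, φ x ≠ 0 → (x : K)⁻¹ ∈ O) : IsLocalHom φ := by
  refine ⟨fun x hx => ?_⟩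
  have hx0 : (x : K) ≠ 0 := by
    rintro h0
    rw [show x = 0 from Subtype.ext h0, map_zero] at hx
    exact not_isUnit_zero hx
  exact IsUnit.of_mul_eq_one ⟨_, h x hx.ne_zero⟩ (Subtype.ext (mul_inv_cancel₀ hx0))

end ResidueMap

section OrderedResidue

variable {k K : Type*} [CommRing k] [LinearOrder k] [CommRing K] [PartialOrder K] [Algebra k K]
  {O : Subalgebra k K} {φ : O →ₐ[k] k}

theorem residue_nonneg_of_pos (hφ : ∀ x : O, φ x ≠ 0 → (0 < (x : K) ↔ 0 < φ x)) {x : O}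
    (hx : 0 < (x : K)) : 0 ≤ φ x := by
  rcases eq_or_ne (φ x) 0 with h | h
  · exact h.ge
  · exact ((hφ x h).1 hx).le

theorem neg_iff_residue_neg [IsOrderedRing k] [IsOrderedRing K]
    (hφ : ∀ x : O, φ x ≠ 0 → (0 < (x : K) ↔ 0 < φ x)) {x : O} (hx : φ x ≠ 0) :
    (x : K) < 0 ↔ φ x < 0 := by
  simpa using hφ (-x) (by simpa using hx)

end OrderedResidue

section BaseChange

variable {k K V ι : Type*} [CommRing k] [CommRing K] [Algebra k K] [AddCommGroup V] [Module k V]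
  [Fintype ι] [DecidableEq ι] {O : Subalgebra k K} (b : Module.Basis ι k V) {A : Matrix ι ι O}
  {W : ι → K ⊗[k] V}

theorem tmul_eq_sum_smul_iff (hW : ∀ i l, (b.baseChange K).repr (W i) l = A i l)
    (hA : IsUnit A.det) (u : V) (μ : ι → K) :
    (1 : K) ⊗ₜ[k] u = ∑ i, μ i • W i ↔ μ = O.val ∘ ((algebraMap k O ∘ b.repr u) ᵥ* A⁻¹) := by
  rw [← vecMul_map_eq_comp_iff O.val hA, ← (b.baseChange K).repr.injective.eq_iff, eq_comm,
    funext_iff, Finsupp.ext_iff]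
  refine forall_congr' fun l => ?_
  simp [vecMul, dotProduct, hW, Algebra.smul_def, mul_comm]

theorem map_eq_coe_det_mul (hW : ∀ i l, (b.baseChange K).repr (W i) l = A i l)
    (ω : V [⋀^ι]→ₗ[k] k) (ωK : (K ⊗[k] V) [⋀^ι]→ₗ[K] K)
    (hcompat : ωK (fun i => (1 : K) ⊗ₜ[k] b i) = algebraMap k K (ω b)) :
    ωK W = ((A.det * algebraMap k O (ω b) : O) : K) := by
  rw [ωK.map_eq_det_mul_map_basis (b.baseChange K) (A := A.map O.val) hW]
  rw [show ⇑(b.baseChange K) = fun i => (1 : K) ⊗ₜ[k] b i from funext (b.baseChange_apply K),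
    hcompat, Subalgebra.coe_mul, Subalgebra.coe_algebraMap]
  exact congrArg (· * _) (RingHom.map_det (O.val : O →+* K) A).symm

theorem ne_zero_of_tmul_eq_sum_smul [PartialOrder K] [Nonempty ι]
    (hW : ∀ i l, (b.baseChange K).repr (W i) l = A i l) (hA : IsUnit A.det) {u : V}
    {μ : ι → K} (hμ : ∀ i, 0 < μ i) (h : (1 : K) ⊗ₜ[k] u = ∑ i, μ i • W i) : u ≠ 0 := by
  rintro rfl
  rw [tmul_eq_sum_smul_iff b hW hA] at h
  obtain ⟨i⟩ := ‹Nonempty ι›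
  simpa [h] using hμ i

end BaseChange

theorem exists_baseChange_repr_eq_of_map_eq_one {k K V : Type*} [CommRing k] [CommRing K]
    [Algebra k K] [AddCommGroup V] [Module k V] {O : Subalgebra k K} (φ : O →ₐ[k] k) {d : ℕ}
    (hd : 0 < d) (b : Module.Basis (Fin d) k V) (v : Fin d → Fin d → V) (hv : ∀ i, v i ⟨0, hd⟩ = b i)
    (t : Fin d → O) (ht : ∀ i, φ (t i) = 0) :
    ∃ A : Matrix (Fin d) (Fin d) O, A.map φ = 1 ∧ ∀ i l,
      (b.baseChange K).repr (∑ j : Fin d, (t i : K) ^ (j : ℕ) • ((1 : K) ⊗ₜ[k] v i j)) l =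
        A i l := by
  refine ⟨.of fun i l => ∑ j : Fin d, t i ^ (j : ℕ) * algebraMap k O (b.repr (v i j) l), ?_, ?_⟩
  · ext i l
    rw [map_apply, of_apply, map_sum_pow_mul_of_map_eq_zero φ (ht i) hd]
    simp [hv, one_apply, Finsupp.single_apply]
  · intro i l
    simp [map_sum, Algebra.smul_def]

theorem residue_algebraMap_vecMul_inv {k K ι : Type*} [CommRing k] [CommRing K] [Algebra k K]
    [Fintype ι] [DecidableEq ι] {O : Subalgebra k K} {φ : O →ₐ[k] k} [IsLocalHom φ]
    {A : Matrix ι ι O} (hA : A.map φ = 1) (c : ι → k) (i : ι) :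
    φ ((algebraMap k O ∘ c ᵥ* A⁻¹) i) = c i := by
  rw [map_vecMul_of_map_eq_one φ (map_nonsing_inv_eq_one φ hA), Function.comp_apply,
    AlgHom.commutes, Algebra.algebraMap_self_apply]

section Cone

variable {k K V ι : Type*} [Field k] [LinearOrder k] [CommRing K] [PartialOrder K] [Algebra k K]
  [AddCommGroup V] [Module k V] [Fintype ι] [DecidableEq ι] {O : Subalgebra k K}
  {φ : O →ₐ[k] k} [IsLocalHom φ] (b : Module.Basis ι k V) {A : Matrix ι ι O}
  {W : ι → K ⊗[k] V}

theorem exists_pos_tmul_eq_sum_smul (hφ : ∀ x : O, φ x ≠ 0 → (0 < (x : K) ↔ 0 < φ x))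
    (hW : ∀ i l, (b.baseChange K).repr (W i) l = A i l) (hA : A.map φ = 1) {u : V}
    (hu : ∀ l, 0 < b.repr u l) :
    ∃ μ : ι → K, (∀ i, 0 < μ i) ∧ (1 : K) ⊗ₜ[k] u = ∑ i, μ i • W i := by
  refine ⟨_, fun i => ?_, (tmul_eq_sum_smul_iff b hW (isUnit_det_of_map_eq_one_s5 φ hA) u _).2 rfl⟩
  have hres := residue_algebraMap_vecMul_inv hA (b.repr u) i
  exact (hφ _ (hres ▸ (hu i).ne')).2 (hres ▸ hu i)

theorem repr_nonneg_of_tmul_eq_sum_smul (hφ : ∀ x : O, φ x ≠ 0 → (0 < (x : K) ↔ 0 < φ x))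
    (hW : ∀ i l, (b.baseChange K).repr (W i) l = A i l) (hA : A.map φ = 1) {u : V}
    {μ : ι → K} (hμ : ∀ i, 0 < μ i) (h : (1 : K) ⊗ₜ[k] u = ∑ i, μ i • W i) (l : ι) :
    0 ≤ b.repr u l := by
  rw [tmul_eq_sum_smul_iff b hW (isUnit_det_of_map_eq_one_s5 φ hA)] at h
  subst h
  simpa only [residue_algebraMap_vecMul_inv hA] using residue_nonneg_of_pos hφ (hμ l)

end Cone

theorem stmt5_general (k K : Type*) [Field k] [LinearOrder k] [IsStrictOrderedRing k]
    [Field K] [LinearOrder K] [IsStrictOrderedRing K] [Algebra k K]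
    (O : Subring K)
    (halg : ∀ c : k, algebraMap k K c ∈ O)
    (ρ : K → k)
    (hρadd : ∀ x y : K, x ∈ O → y ∈ O → ρ (x + y) = ρ x + ρ y)
    (hρmul : ∀ x y : K, x ∈ O → y ∈ O → ρ (x * y) = ρ x * ρ y)
    (hρalg : ∀ c : k, ρ (algebraMap k K c) = c)
    (hunit : ∀ x : K, x ∈ O → ρ x ≠ 0 → x ≠ 0 ∧ x⁻¹ ∈ O)
    -- the ordering of `K` is the one induced by the valuation and the ordering of the
    -- residue field `k`:
    (horder : ∀ x : K, x ∈ O → ρ x ≠ 0 → (0 < x ↔ 0 < ρ x))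
    (d : ℕ) (hd : 0 < d)
    (V : Type*) [AddCommGroup V] [Module k V]
    (vB : Module.Basis (Fin d) k V)
    (g : Fin d → (V ≃ₗ[k] V))
    (t : Fin d → K)
    (ht : ∀ i, t i ∈ O ∧ ρ (t i) = 0)
    (hb : LinearIndependent k (fun i : Fin d => g i (vB ⟨0, hd⟩)))
    -- the determinant form `ω` on `V` and its `K`-multilinear extension `ωK`
    (ω : AlternatingMap k V k (Fin d)) (hω : ω ≠ 0)
    (ωK : AlternatingMap K (K ⊗[k] V) K (Fin d))
    (hcompat : ∀ u : Fin d → V, ωK (fun i => (1 : K) ⊗ₜ[k] u i) = algebraMap k K (ω u))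
    -- the vectors b̃ᵢ = gᵢ(b(v̲,tᵢ))
    (W : Fin d → K ⊗[k] V)
    (hWdef : W = fun i => ∑ j : Fin d, (t i) ^ (j : ℕ) • ((1 : K) ⊗ₜ[k] (g i (vB j)))) :
    ((0 < ωK W ↔ 0 < ω (fun i => g i (vB ⟨0, hd⟩))) ∧
      (ωK W < 0 ↔ ω (fun i => g i (vB ⟨0, hd⟩)) < 0)) ∧
    (∀ u : V, (∃ c : Fin d → k, (∀ i, 0 < c i) ∧ u = ∑ i, c i • g i (vB ⟨0, hd⟩)) →
      ∃ μ : Fin d → K, (∀ i, 0 < μ i) ∧ (1 : K) ⊗ₜ[k] u = ∑ i, μ i • W i) ∧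
    (∀ u : V, (∃ μ : Fin d → K, (∀ i, 0 < μ i) ∧ (1 : K) ⊗ₜ[k] u = ∑ i, μ i • W i) →
      u ≠ 0 ∧ ∃ c : Fin d → k, (∀ i, 0 ≤ c i) ∧ u = ∑ i, c i • g i (vB ⟨0, hd⟩)) := by
  let O' : Subalgebra k K := { O with algebraMap_mem' := halg }
  let φ := O'.residueAlgHom ρ hρadd hρmul hρalg
  have : IsLocalHom φ := Subalgebra.isLocalHom_of_inv_mem φ fun x hx => (hunit x x.2 hx).2
  have hφ : ∀ x : O', φ x ≠ 0 → (0 < (x : K) ↔ 0 < φ x) := fun x => horder x x.2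
  have : Nonempty (Fin d) := ⟨⟨0, hd⟩⟩
  let b : Module.Basis (Fin d) k V :=
    basisOfLinearIndependentOfCardEqFinrank hb (by simp [Module.finrank_eq_card_basis vB])
  have hb_apply : ∀ i, g i (vB ⟨0, hd⟩) = b i := fun i =>
    (congrFun (coe_basisOfLinearIndependentOfCardEqFinrank hb _) i).symm
  obtain ⟨A, hA, hW⟩ := exists_baseChange_repr_eq_of_map_eq_one φ hd b (fun i j => g i (vB j))
    hb_apply (fun i => ⟨t i, (ht i).1⟩) (fun i => (ht i).2)
  subst hWdef
  have hωb : ω b ≠ 0 := (ω.map_basis_ne_zero_iff b).2 hω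
  have hres : φ (A.det * algebraMap k O' (ω b)) = ω b := by
    rw [map_mul, map_det_eq_one φ hA, AlgHom.commutes, one_mul, Algebra.algebraMap_self_apply]
  have hωK := map_eq_coe_det_mul b hW ω ωK (hcompat b)
  simp only [hb_apply]
  refine ⟨⟨?_, ?_⟩, ?_, ?_⟩
  · rw [hωK, hφ _ (by rwa [hres]), hres]
  · rw [hωK, neg_iff_residue_neg hφ (by rwa [hres]), hres]
  · rintro u ⟨c, hc, rfl⟩
    exact exists_pos_tmul_eq_sum_smul b hφ hW hA (by rwa [b.repr_sum_self])
  · rintro u ⟨μ, hμ, hu⟩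
    exact ⟨ne_zero_of_tmul_eq_sum_smul b hW (isUnit_det_of_map_eq_one_s5 φ hA) hμ hu, b.repr u,
      repr_nonneg_of_tmul_eq_sum_smul b hφ hW hA hμ hu, (b.sum_repr u).symm⟩

/-- Lemma 3.6 of the paper: in the setting of the valuation-theoretic ordered extension
`K/k` (with valuation ring `O`, residue map `ρ`, order on `K` determined by residues),
if `b₁ = g₁(v₁),…,b_d = g_d(v₁)` is a basis of `V` and `b̃ᵢ = gᵢ(b(v̲,tᵢ)) ∈ K ⊗[k] V`,
then the sign of `ω(b₁,…,b_d)` equals the sign of `ω_K(b̃₁,…,b̃_d)`, and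
`C(b₁,…,b_d) ⊆ C(b̃₁,…,b̃_d) ∩ V ⊆ C[b₁,…,b_d]`. -/
theorem stmt5 (k K : Type*) [Field k] [LinearOrder k] [IsStrictOrderedRing k]
    [Field K] [LinearOrder K] [IsStrictOrderedRing K] [Algebra k K]
    (halgpos : ∀ c : k, 0 < c → 0 < algebraMap k K c)
    (O : Subring K)
    (halg : ∀ c : k, algebraMap k K c ∈ O)
    (hval : ∀ x : K, x ∈ O ∨ x⁻¹ ∈ O)
    (ρ : K → k)
    (hρadd : ∀ x y : K, x ∈ O → y ∈ O → ρ (x + y) = ρ x + ρ y)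
    (hρmul : ∀ x y : K, x ∈ O → y ∈ O → ρ (x * y) = ρ x * ρ y)
    (hρalg : ∀ c : k, ρ (algebraMap k K c) = c)
    (hunit : ∀ x : K, x ∈ O → ρ x ≠ 0 → x ≠ 0 ∧ x⁻¹ ∈ O)
    -- the ordering of `K` is the one induced by the valuation and the ordering of the
    -- residue field `k`:
    (horder : ∀ x : K, x ∈ O → ρ x ≠ 0 → (0 < x ↔ 0 < ρ x))
    (d : ℕ) (hd : 0 < d)
    (V : Type*) [AddCommGroup V] [Module k V]
    (vB : Module.Basis (Fin d) k V)
    (g : Fin d → (V ≃ₗ[k] V))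
    (t : Fin d → K)
    (ht : ∀ i, t i ∈ O ∧ ρ (t i) = 0)
    (hb : LinearIndependent k (fun i : Fin d => g i (vB ⟨0, hd⟩)))
    -- the determinant form `ω` on `V` and its `K`-multilinear extension `ωK`
    (ω : AlternatingMap k V k (Fin d)) (hω : ω ≠ 0)
    (ωK : AlternatingMap K (K ⊗[k] V) K (Fin d))
    (hcompat : ∀ u : Fin d → V, ωK (fun i => (1 : K) ⊗ₜ[k] u i) = algebraMap k K (ω u))
    -- the vectors b̃ᵢ = gᵢ(b(v̲,tᵢ))
    (W : Fin d → K ⊗[k] V)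
    (hWdef : W = fun i => ∑ j : Fin d, (t i) ^ (j : ℕ) • ((1 : K) ⊗ₜ[k] (g i (vB j))))
    -- the b̃ᵢ form a K-basis of K ⊗[k] V (general position, Lemma 3.1)
    (B : Module.Basis (Fin d) K (K ⊗[k] V)) (hB : ∀ i, B i = W i) :
    ((0 < ωK W ↔ 0 < ω (fun i => g i (vB ⟨0, hd⟩))) ∧
      (ωK W < 0 ↔ ω (fun i => g i (vB ⟨0, hd⟩)) < 0)) ∧
    (∀ u : V, (∃ c : Fin d → k, (∀ i, 0 < c i) ∧ u = ∑ i, c i • g i (vB ⟨0, hd⟩)) →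
      ∃ μ : Fin d → K, (∀ i, 0 < μ i) ∧ (1 : K) ⊗ₜ[k] u = ∑ i, μ i • W i) ∧
    (∀ u : V, (∃ μ : Fin d → K, (∀ i, 0 < μ i) ∧ (1 : K) ⊗ₜ[k] u = ∑ i, μ i • W i) →
      u ≠ 0 ∧ ∃ c : Fin d → k, (∀ i, 0 ≤ c i) ∧ u = ∑ i, c i • g i (vB ⟨0, hd⟩)) :=
  stmt5_general k K O halg ρ hρadd hρmul hρalg hunit horder d hd V vB g t ht hb ω hω ωK hcompat W
    hWdef
end
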